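/- arXiv:1307.2141 — 8 statements merged into one kernel-verified Lean document; each statement's English description precedes it below -/
import Mathlib

section
/- Let G be a connected graph on [n] that has the interval property with respect to its labeling, and let H = in_lex(G). Then the complement graph of H contains no induced cycle of length 5 or more. -/
open SimpleGraph

/-- `G` has the interval property with respect to its labeling: for every edge `{i,j}`
with `i < j`, every pair `{k,l}` with `i ≤ k < l ≤ j` is an edge of `G`. -/
def HasIntervalProperty {n : ℕ} (G : SimpleGraph (Fin n)) : Prop :=
  ∀ i j k l : Fin n, G.Adj i j → i < j → i ≤ k → k < l → l ≤ j → G.Adj k l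

/-- The bipartite graph `in_lex(G)` on `{x_1,…,x_n} ∪ {y_1,…,y_n}` (here `Sum.inl i = x_i`,
`Sum.inr j = y_j`) whose edges are the pairs `{x_i, y_j}` with `i < j` and `{i,j} ∈ E(G)`. -/
def inLex {n : ℕ} (G : SimpleGraph (Fin n)) : SimpleGraph (Fin n ⊕ Fin n) :=
  SimpleGraph.fromRel (fun u v =>
    ∃ i j : Fin n, i < j ∧ G.Adj i j ∧ u = Sum.inl i ∧ v = Sum.inr j)

/-- `M` is an induced matching of `H`: a set of edges of `H`, pairwise vertex-disjoint,
such that no edge of `H` joins two vertices lying in distinct edges of `M`. -/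
def IsInducedMatching {V : Type*} (H : SimpleGraph V) (M : Set (Sym2 V)) : Prop :=
  M ⊆ H.edgeSet ∧
  (∀ e ∈ M, ∀ f ∈ M, e ≠ f → ∀ v, v ∈ e → v ∉ f) ∧
  (∀ e ∈ M, ∀ f ∈ M, e ≠ f → ∀ u ∈ e, ∀ v ∈ f, ¬ H.Adj u v)

/-- An indexed family of `m` pairwise distinct edges forming an induced matching of `H`. -/
def IsInducedMatchingFamily {V : Type*} (H : SimpleGraph V) {m : ℕ} (f : Fin m → Sym2 V) : Prop :=
  Function.Injective f ∧ IsInducedMatching H (Set.range f)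

/-- `p` is an induced path of length `l` in `G`: `l+1` distinct vertices such that the edges
of `G` among them are exactly the consecutive pairs. -/
def IsInducedPath {V : Type*} (G : SimpleGraph V) (l : ℕ) (p : Fin (l + 1) → V) : Prop :=
  Function.Injective p ∧
  ∀ a b : Fin (l + 1), G.Adj (p a) (p b) ↔ ((a : ℕ) + 1 = b ∨ (b : ℕ) + 1 = a)

/-- `c` is an induced cycle of length `k` in `H`: `k` distinct vertices such that the edges
of `H` among them are exactly the consecutive pairs (cyclically). -/
def IsInducedCycle {V : Type*} (H : SimpleGraph V) (k : ℕ) (c : Fin k → V) : Prop :=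
  3 ≤ k ∧ Function.Injective c ∧
  ∀ a b : Fin k, H.Adj (c a) (c b) ↔ (((a : ℕ) + 1) % k = b ∨ ((b : ℕ) + 1) % k = a)

/-- Condition (∗) for an induced matching `{x_{i t}, y_{j t}}` of `in_lex(G)`: for every
index `a` and vertex `t < i a` with `{t, j a} ∈ E(G)`, replacing `x_{i a}` by `x_t`
does not yield an induced matching of `in_lex(G)`. -/
def CondStar {n m : ℕ} (G : SimpleGraph (Fin n)) (i j : Fin m → Fin n) : Prop :=
  ∀ a : Fin m, ∀ t : Fin n, t < i a → G.Adj t (j a) →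
    ¬ IsInducedMatchingFamily (inLex G)
        (fun u => if u = a then s(Sum.inl t, Sum.inr (j u))
                  else s(Sum.inl (i u), Sum.inr (j u)))

lemma inLex_not_adj_same {n : ℕ} (G : SimpleGraph (Fin n)) (u v : Fin n ⊕ Fin n)
    (h : u.isLeft = v.isLeft) : ¬ (inLex G).Adj u v := by
  intro hadj
  rw [inLex, SimpleGraph.fromRel_adj] at hadj
  obtain ⟨hne, h1 | h1⟩ := hadj <;> obtain ⟨i, j, _, _, hu, hv⟩ := h1 <;>
    subst hu <;> subst hv <;> simp at h

/-- If `G` is connected and has the interval property, then the complement of the bipartite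
graph `H = in_lex(G)` contains no induced cycle of length at least 5. -/
theorem stmt_1 {n : ℕ} (G : SimpleGraph (Fin n)) (hconn : G.Connected)
    (hG : HasIntervalProperty G) :
    ∀ k : ℕ, 5 ≤ k → ∀ c : Fin k → (Fin n ⊕ Fin n), ¬ IsInducedCycle (inLex G)ᶜ k c := by
  classical
  intro k hk c hcyc
  obtain ⟨-, hinj, hadj⟩ := hcyc
  have consec : ∀ a b : Fin k, (((a : ℕ) + 1) % k = (b : ℕ)) ↔
      ((a : ℕ) + 1 = (b : ℕ) ∨ ((a : ℕ) + 1 = k ∧ (b : ℕ) = 0)) := by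
    intro a b
    rcases lt_or_eq_of_le (Nat.succ_le_of_lt a.isLt) with h | h
    · rw [Nat.mod_eq_of_lt h]; omega
    · rw [show (a:ℕ)+1 = k from h, Nat.mod_self]; omega
  have key : ∀ a b d : Fin k, a ≠ b → a ≠ d → b ≠ d →
      (c a).isLeft = (c b).isLeft → (c a).isLeft = (c d).isLeft → False := by
    intro a b d hab had hbd h1 h2
    have adj : ∀ x y : Fin k, x ≠ y → (c x).isLeft = (c y).isLeft →
        (((x : ℕ) + 1) % k = (y : ℕ) ∨ ((y : ℕ) + 1) % k = (x : ℕ)) := by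
      intro x y hxy hsame
      rw [← hadj]
      rw [SimpleGraph.compl_adj]
      exact ⟨fun h => hxy (hinj h), inLex_not_adj_same G _ _ hsame⟩
    have A1 := adj a b hab h1
    have A2 := adj a d had h2
    have A3 := adj b d hbd (h1.symm.trans h2)
    rw [consec, consec] at A1 A2 A3
    have hab' : (a : ℕ) ≠ (b : ℕ) := fun h => hab (Fin.ext h)
    have had' : (a : ℕ) ≠ (d : ℕ) := fun h => had (Fin.ext h)
    have hbd' : (b : ℕ) ≠ (d : ℕ) := fun h => hbd (Fin.ext h)
    have := a.isLt; have := b.isLt; have := d.isLt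
    omega
  have hS : (Finset.univ.filter (fun a : Fin k => (c a).isLeft = true)).card ≤ 2 := by
    by_contra h
    push_neg at h
    obtain ⟨a, b, d, ha, hb, hd, hab, had, hbd⟩ := Finset.two_lt_card_iff.mp h
    simp only [Finset.mem_filter] at ha hb hd
    exact key a b d hab had hbd (ha.2.trans hb.2.symm) (ha.2.trans hd.2.symm)
  have hT : (Finset.univ.filter (fun a : Fin k => ¬ ((c a).isLeft = true))).card ≤ 2 := by
    by_contra h
    push_neg at h
    obtain ⟨a, b, d, ha, hb, hd, hab, had, hbd⟩ := Finset.two_lt_card_iff.mp h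
    simp only [Finset.mem_filter, Bool.not_eq_true] at ha hb hd
    exact key a b d hab had hbd (ha.2.trans hb.2.symm) (ha.2.trans hd.2.symm)
  have hsum := Finset.card_filter_add_card_filter_not
    (s := (Finset.univ : Finset (Fin k))) (p := fun a : Fin k => (c a).isLeft = true)
  simp only [Finset.card_univ, Fintype.card_fin] at hsum
  omega
end

section
/- Let G be a connected graph on [n] that has the interval property with respect to its labeling, and let H = in_lex(G). Then H contains no induced cycle of length 5 or more. -/
/-!
Every edge of `in_lex(G)` joins some `x_i` to some `y_j` with `i < j`. On an induced cycle of
length at least 5 pick the `y`-vertex `y_B` of largest index and look at the stretch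
`y_{B₀} – x_{A₀} – y_B – x_{A₁} – y_{B₁}` around it. If `A₀ < B₁`, then `B₁ ≤ B` and the interval
property applied to the edge `{A₀, B}` would make `x_{A₀} y_{B₁}` a chord; hence `B₁ ≤ A₀`, and
symmetrically `B₀ ≤ A₁`. Together with `A₀ < B₀` and `A₁ < B₁` this is the impossible chain
`B₁ ≤ A₀ < B₀ ≤ A₁ < B₁`.
-/

open SimpleGraph

section inLex
variable {n : ℕ} {G : SimpleGraph (Fin n)}

lemma inLex_adj_inl_inr {i j : Fin n} : (inLex G).Adj (.inl i) (.inr j) ↔ i < j ∧ G.Adj i j := by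
  simp [inLex]

lemma inLex_adj_inl_iff {i : Fin n} {v : Fin n ⊕ Fin n} :
    (inLex G).Adj (.inl i) v ↔ ∃ j, v = .inr j ∧ i < j ∧ G.Adj i j := by
  cases v <;> simp [inLex]

lemma inLex_adj_inr_iff {j : Fin n} {v : Fin n ⊕ Fin n} :
    (inLex G).Adj (.inr j) v ↔ ∃ i, v = .inl i ∧ i < j ∧ G.Adj i j := by
  cases v <;> simp [inLex]

lemma HasIntervalProperty.le_of_not_inLex_adj (hG : HasIntervalProperty G) {i j l : Fin n}
    (h : (inLex G).Adj (.inl i) (.inr j)) (hlj : l ≤ j)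
    (hn : ¬ (inLex G).Adj (.inl i) (.inr l)) : l ≤ i := by
  rw [inLex_adj_inl_inr] at h hn
  by_contra! hil
  exact hn ⟨hil, hG i j i l h.2 h.1 le_rfl hil hlj⟩

end inLex

lemma exists_inr_forall_inr_le {ι α β : Type*} [Finite ι] [LinearOrder β] {c : ι → α ⊕ β}
    (h : ∃ q j, c q = Sum.inr j) : ∃ p B, c p = Sum.inr B ∧ ∀ q j, c q = Sum.inr j → j ≤ B := by
  obtain ⟨q, j, hq⟩ := h
  obtain ⟨B, ⟨p, hp⟩, hB⟩ := Set.exists_max_image (Sum.inr ⁻¹' Set.range c) id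
    ((Set.finite_range c).preimage Sum.inr_injective.injOn) ⟨j, q, hq⟩
  exact ⟨p, B, hp, fun q j hq => hB j ⟨q, hq⟩⟩

namespace IsInducedCycle
variable {V : Type*} {H : SimpleGraph V} {k : ℕ} [NeZero k] {c : Fin k → V}

lemma adj_iff (hc : IsInducedCycle H k c) {a b : Fin k} :
    H.Adj (c a) (c b) ↔ a + 1 = b ∨ b + 1 = a := by
  simp only [hc.2.2, Fin.ext_iff, Fin.val_add, Fin.val_one', Nat.add_mod_mod]

lemma adj_add_one (hc : IsInducedCycle H k c) (a : Fin k) : H.Adj (c a) (c (a + 1)) :=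
  hc.adj_iff.mpr (.inl rfl)

lemma adj_sub_one (hc : IsInducedCycle H k c) (a : Fin k) : H.Adj (c a) (c (a - 1)) :=
  hc.adj_iff.mpr (.inr (sub_add_cancel a 1))

lemma not_adj_add_three (hc : IsInducedCycle H k c) (hk : 5 ≤ k) (a : Fin k) :
    ¬ H.Adj (c a) (c (a + 1 + 1 + 1)) := by
  rw [hc.adj_iff]
  simp only [Fin.ext_iff, Fin.val_add, Fin.val_one', Nat.add_mod_mod, Nat.mod_add_mod]
  simp only [add_assoc, Nat.reduceAdd, Nat.add_mod_eq_ite, Nat.mod_eq_of_lt a.isLt,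
    Nat.mod_eq_of_lt (by omega : 1 < k), Nat.mod_eq_of_lt (by omega : 3 < k),
    Nat.mod_eq_of_lt (by omega : 4 < k)]
  split_ifs <;> omega

end IsInducedCycle

theorem stmt_2_general {n : ℕ} (G : SimpleGraph (Fin n))
    (hG : HasIntervalProperty G) :
    ∀ k : ℕ, 5 ≤ k → ∀ c : Fin k → (Fin n ⊕ Fin n), ¬ IsInducedCycle (inLex G) k c := by
  intro k hk c hc
  have : NeZero k := ⟨by omega⟩
  have hinr : ∃ q j, c q = .inr j := by
    rcases h0 : c 0 with i | j
    · obtain ⟨j, hj, -⟩ := inLex_adj_inl_iff.mp (h0 ▸ hc.adj_add_one 0)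
      exact ⟨0 + 1, j, hj⟩
    · exact ⟨0, j, h0⟩
  obtain ⟨p, B, hpB, hmax⟩ := exists_inr_forall_inr_le hinr
  obtain ⟨A₀, hA₀, hA₀B⟩ := inLex_adj_inr_iff.mp (hpB ▸ hc.adj_sub_one p)
  obtain ⟨A₁, hA₁, hA₁B⟩ := inLex_adj_inr_iff.mp (hpB ▸ hc.adj_add_one p)
  obtain ⟨B₀, hB₀, hA₀B₀, -⟩ := inLex_adj_inl_iff.mp (hA₀ ▸ hc.adj_sub_one (p - 1))
  obtain ⟨B₁, hB₁, hA₁B₁, -⟩ := inLex_adj_inl_iff.mp (hA₁ ▸ hc.adj_add_one (p + 1))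
  have hn₀ := hc.not_adj_add_three hk (p - 1)
  have hn₁ := hc.not_adj_add_three hk (p - 1 - 1)
  simp only [sub_add_cancel] at hn₀ hn₁
  rw [hA₀, hB₁] at hn₀
  rw [hB₀, hA₁, (inLex G).adj_comm] at hn₁
  have hB₁A₀ : B₁ ≤ A₀ :=
    hG.le_of_not_inLex_adj (inLex_adj_inl_inr.mpr hA₀B) (hmax _ _ hB₁) hn₀
  have hB₀A₁ : B₀ ≤ A₁ :=
    hG.le_of_not_inLex_adj (inLex_adj_inl_inr.mpr hA₁B) (hmax _ _ hB₀) hn₁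
  exact (hB₁A₀.trans_lt (hA₀B₀.trans (hB₀A₁.trans_lt hA₁B₁))).false

/-- If `G` is connected and has the interval property, then the bipartite graph
`H = in_lex(G)` contains no induced cycle of length at least 5. -/
theorem stmt_2 {n : ℕ} (G : SimpleGraph (Fin n)) (hconn : G.Connected)
    (hG : HasIntervalProperty G) :
    ∀ k : ℕ, 5 ≤ k → ∀ c : Fin k → (Fin n ⊕ Fin n), ¬ IsInducedCycle (inLex G) k c :=
  stmt_2_general G hG
end

section
/- Let G be a graph on [n] that has the interval property with respect to its labeling. Then every induced path i_0, i_1, …, i_l in G with l ≥ 1 is monotone: either i_0 < i_1 < ⋯ < i_l or i_0 > i_1 > ⋯ > i_l. -/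
/-!
Under the interval property, two neighbours of a vertex lying on the same side of it are
adjacent. So in an induced path `a - b - c` the middle vertex lies strictly between `a` and `c`:
the path never changes direction, and a sequence that never changes direction is monotone.
-/

open SimpleGraph

/-- `hturn i` reads `f i < f (i + 1) ↔ f (i + 1) < f (i + 2)`. -/
theorem Fin.strictMono_or_strictAnti_of_lt_succ_iff {α : Type*} [LinearOrder α] {m : ℕ}
    (f : Fin (m + 2) → α) (hne : ∀ i : Fin (m + 1), f i.castSucc ≠ f i.succ)
    (hturn : ∀ i : Fin m,
      f i.castSucc.castSucc < f i.castSucc.succ ↔ f i.succ.castSucc < f i.succ.succ) :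
    StrictMono f ∨ StrictAnti f := by
  have hsame : ∀ i : Fin (m + 1), f i.castSucc < f i.succ ↔ f 0 < f 1 :=
    Fin.induction Iff.rfl (fun i ih => (hturn i).symm.trans ih)
  rw [Fin.strictMono_iff_lt_succ, Fin.strictAnti_iff_succ_lt]
  by_cases h01 : f 0 < f 1
  · exact .inl fun i => (hsame i).2 h01
  · exact .inr fun i => (hne i).symm.lt_or_gt.resolve_right fun h => h01 ((hsame i).1 h)

namespace HasIntervalProperty

variable {n : ℕ} {G : SimpleGraph (Fin n)}

theorem adj_of_lt_of_lt (hG : HasIntervalProperty G) {a b c : Fin n} (hac : G.Adj a c)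
    (hbc : G.Adj b c) (ha : a < c) (hb : b < c) (hab : a ≠ b) : G.Adj a b := by
  rcases hab.lt_or_gt with h | h
  · exact hG a c a b hac ha le_rfl h hb.le
  · exact (hG b c b a hbc hb le_rfl h ha.le).symm

theorem adj_of_gt_of_gt (hG : HasIntervalProperty G) {a b c : Fin n} (hca : G.Adj c a)
    (hcb : G.Adj c b) (ha : c < a) (hb : c < b) (hab : a ≠ b) : G.Adj a b := by
  rcases hab.lt_or_gt with h | h
  · exact hG c b a b hcb hb ha.le h le_rfl
  · exact (hG c a b a hca ha hb.le h le_rfl).symm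

theorem lt_iff_lt_of_not_adj (hG : HasIntervalProperty G) {a b c : Fin n} (hab : G.Adj a b)
    (hbc : G.Adj b c) (hac : ¬ G.Adj a c) (hne : a ≠ c) : a < b ↔ b < c := by
  constructor
  · intro h
    by_contra! hcb
    exact hac (hG.adj_of_lt_of_lt hab hbc.symm h (hcb.lt_of_ne hbc.ne.symm) hne)
  · intro h
    by_contra! hba
    exact hac (hG.adj_of_gt_of_gt hab.symm hbc (hba.lt_of_ne hab.ne.symm) h hne)

end HasIntervalProperty

namespace IsInducedPath

variable {V : Type*} {G : SimpleGraph V} {m : ℕ} {p : Fin (m + 2) → V}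

theorem adj_castSucc_succ (hp : IsInducedPath G (m + 1) p) (i : Fin (m + 1)) :
    G.Adj (p i.castSucc) (p i.succ) :=
  (hp.2 _ _).2 (.inl rfl)

theorem not_adj_of_succ_succ (hp : IsInducedPath G (m + 1) p) (i : Fin m) :
    ¬ G.Adj (p i.castSucc.castSucc) (p i.succ.succ) := by
  rw [hp.2]
  simp only [Fin.val_castSucc, Fin.val_succ]
  omega

theorem ne_of_succ_succ (hp : IsInducedPath G (m + 1) p) (i : Fin m) :
    p i.castSucc.castSucc ≠ p i.succ.succ :=
  hp.1.ne (by simp [Fin.ext_iff]; omega)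

end IsInducedPath

theorem stmt_4_general {n : ℕ} (G : SimpleGraph (Fin n)) (hG : HasIntervalProperty G)
    (l : ℕ) (p : Fin (l + 1) → Fin n) (hp : IsInducedPath G l p) :
    StrictMono p ∨ StrictAnti p := by
  cases l with
  | zero => exact .inl (Subsingleton.strictMono (α := Fin 1) p)
  | succ m =>
    refine Fin.strictMono_or_strictAnti_of_lt_succ_iff p
      (fun i => (hp.adj_castSucc_succ i).ne) fun i => ?_
    exact hG.lt_iff_lt_of_not_adj (hp.adj_castSucc_succ _) (hp.adj_castSucc_succ i.succ)
      (hp.not_adj_of_succ_succ i) (hp.ne_of_succ_succ i)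

/-- If `G` has the interval property, then every induced path in `G` of length at least 1
is monotone: strictly increasing or strictly decreasing. -/
theorem stmt_4 {n : ℕ} (G : SimpleGraph (Fin n)) (hG : HasIntervalProperty G)
    (l : ℕ) (hl : 1 ≤ l) (p : Fin (l + 1) → Fin n) (hp : IsInducedPath G l p) :
    StrictMono p ∨ StrictAnti p :=
  stmt_4_general G hG l p hp
end

section
/- Let G be a graph on [n] that has the interval property with respect to its labeling, let H = in_lex(G), and let {x_{i_1}, y_{j_1}}, …, {x_{i_m}, y_{j_m}} be an induced matching of H with i_1 < i_2 < ⋯ < i_m. Then j_t ≤ i_{t+1} for all 1 ≤ t ≤ m−1. -/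
open SimpleGraph

/-- If `{x_{i_1}, y_{j_1}}, …, {x_{i_m}, y_{j_m}}` is an induced matching of `in_lex(G)`
with `i_1 < ⋯ < i_m` and `G` has the interval property, then `j_t ≤ i_{t+1}` for all `t`. -/
theorem stmt_7 {n m : ℕ} (G : SimpleGraph (Fin n)) (hG : HasIntervalProperty G)
    (i j : Fin m → Fin n) (hmono : StrictMono i)
    (hM : IsInducedMatchingFamily (inLex G)
      (fun t => s(Sum.inl (i t), Sum.inr (j t)))) :
    ∀ a b : Fin m, (a : ℕ) + 1 = b → j a ≤ i b := by
  intro a b hab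
  by_contra hlt
  push_neg at hlt
  have hab' : a ≠ b := by
    intro h; subst h; omega
  have haltb : a < b := by
    simp only [Fin.lt_iff_val_lt_val]; omega
  obtain ⟨hinj, hsub, _, hind⟩ := hM
  have hea : (inLex G).Adj (Sum.inl (i a)) (Sum.inr (j a)) := by
    have := hsub (Set.mem_range_self a)
    rwa [SimpleGraph.mem_edgeSet] at this
  rw [inLex, SimpleGraph.fromRel_adj] at hea
  obtain ⟨-, ⟨i', j', hij, hadj, h1, h2⟩ | ⟨i', j', _, _, h1, _⟩⟩ := hea
  · obtain rfl : i' = i a := by injection h1.symm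
    obtain rfl : j' = j a := by injection h2.symm
    have hadj' : G.Adj (i b) (j a) :=
      hG (i a) (j a) (i b) (j a) hadj hij (le_of_lt (hmono haltb)) hlt le_rfl
    have hH : (inLex G).Adj (Sum.inl (i b)) (Sum.inr (j a)) := by
      rw [inLex, SimpleGraph.fromRel_adj]
      exact ⟨by simp, Or.inl ⟨i b, j a, hlt, hadj', rfl, rfl⟩⟩
    exact hind _ (Set.mem_range_self b) _ (Set.mem_range_self a)
      (fun h => hab' (hinj h).symm) (Sum.inl (i b)) (Sym2.mem_mk_left _ _)
      (Sum.inr (j a)) (Sym2.mem_mk_right _ _) hH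
  · exact absurd h1 (by simp)
end

section
/- Let G be a graph on [n] that has the interval property with respect to its labeling, and let H = in_lex(G). If H has an induced matching of cardinality m, then H has an induced matching {x_{i_1}, y_{j_1}}, …, {x_{i_m}, y_{j_m}} of cardinality m with i_1 < ⋯ < i_m that satisfies condition (∗). -/
open SimpleGraph

lemma family_comp_perm {V : Type*} {H : SimpleGraph V} {m : ℕ} {f : Fin m → Sym2 V}
    (h : IsInducedMatchingFamily H f) (σ : Equiv.Perm (Fin m)) :
    IsInducedMatchingFamily H (f ∘ σ) := by
  refine ⟨h.1.comp σ.injective, ?_⟩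
  rw [σ.surjective.range_comp f]
  exact h.2

lemma inj_of_family {n m : ℕ} {H : SimpleGraph (Fin n ⊕ Fin n)} {i j : Fin m → Fin n}
    (h : IsInducedMatchingFamily H (fun t => s(Sum.inl (i t), Sum.inr (j t)))) :
    Function.Injective i := by
  intro u v huv
  by_contra hne
  have hfne : s(Sum.inl (i u), Sum.inr (j u)) ≠ s(Sum.inl (i v), Sum.inr (j v)) := by
    intro h'
    exact hne (h.1 h')
  have h3 := h.2.2.1 _ ⟨u, rfl⟩ _ ⟨v, rfl⟩ hfne (Sum.inl (i u)) (by simp)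
  exact h3 (by simp [huv])

lemma edge_struct {n : ℕ} {G : SimpleGraph (Fin n)} {e : Sym2 (Fin n ⊕ Fin n)}
    (he : e ∈ (inLex G).edgeSet) :
    ∃ p : Fin n × Fin n, p.1 < p.2 ∧ G.Adj p.1 p.2 ∧ e = s(Sum.inl p.1, Sum.inr p.2) := by
  induction e with
  | _ u v =>
    rw [SimpleGraph.mem_edgeSet] at he
    rw [inLex, SimpleGraph.fromRel_adj] at he
    obtain ⟨-, h | h⟩ := he <;> obtain ⟨i, j, h1, h2, h3, h4⟩ := h
    · exact ⟨(i, j), h1, h2, by rw [h3, h4]⟩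
    · exact ⟨(i, j), h1, h2, by rw [h3, h4, Sym2.eq_swap]⟩

/-- If `in_lex(G)` has an induced matching of cardinality `m` and `G` has the interval
property, then `in_lex(G)` has an induced matching `{x_{i_1}, y_{j_1}}, …, {x_{i_m}, y_{j_m}}`
of cardinality `m` with `i_1 < ⋯ < i_m` satisfying condition (∗). -/
theorem stmt_8 {n m : ℕ} (G : SimpleGraph (Fin n)) (hG : HasIntervalProperty G)
    (hM : ∃ M : Set (Sym2 (Fin n ⊕ Fin n)), IsInducedMatching (inLex G) M ∧ M.ncard = m) :
    ∃ i j : Fin m → Fin n, StrictMono i ∧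
      IsInducedMatchingFamily (inLex G) (fun t => s(Sum.inl (i t), Sum.inr (j t))) ∧
      CondStar G i j := by
  classical
  -- Step 1: there exists some valid family
  have hex : ∃ i j : Fin m → Fin n, StrictMono i ∧
      IsInducedMatchingFamily (inLex G) (fun t => s(Sum.inl (i t), Sum.inr (j t))) := by
    obtain ⟨M, hMind, hMcard⟩ := hM
    have hcard : M.toFinset.card = m := by
      rw [← Set.ncard_eq_toFinset_card']; exact hMcard
    let e := M.toFinset.equivFinOfCardEq hcard
    set g : Fin m → Sym2 (Fin n ⊕ Fin n) := fun t => ((e.symm t : Sym2 (Fin n ⊕ Fin n))) with hg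
    have hgmem : ∀ t, g t ∈ M := fun t => Set.mem_toFinset.1 (e.symm t).2
    have hginj : Function.Injective g :=
      Subtype.val_injective.comp e.symm.injective
    have hgrange : Set.range g = M := by
      apply Set.Subset.antisymm
      · rintro x ⟨t, rfl⟩; exact hgmem t
      · intro x hx
        exact ⟨e ⟨x, Set.mem_toFinset.2 hx⟩, by simp [hg]⟩
    have hP : ∀ t : Fin m, ∃ p : Fin n × Fin n, p.1 < p.2 ∧ G.Adj p.1 p.2 ∧
        g t = s(Sum.inl p.1, Sum.inr p.2) := fun t => edge_struct (hMind.1 (hgmem t))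
    choose p hp1 hp2 hp3 using hP
    have hfeq : (fun t => s(Sum.inl (p t).1, Sum.inr (p t).2)) = g := by
      funext t; exact (hp3 t).symm
    have hfam : IsInducedMatchingFamily (inLex G)
        (fun t => s(Sum.inl (p t).1, Sum.inr (p t).2)) := by
      rw [hfeq]
      exact ⟨hginj, by rw [hgrange]; exact hMind⟩
    have hinj : Function.Injective (fun t => (p t).1) := inj_of_family hfam
    let σ := Tuple.sort (fun t => (p t).1)
    refine ⟨fun t => (p (σ t)).1, fun t => (p (σ t)).2, ?_, ?_⟩
    · exact (Tuple.monotone_sort _).strictMono_of_injective (hinj.comp σ.injective)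
    · exact family_comp_perm hfam σ
  -- Step 2: minimize the sum of i-values
  set S : Set ℕ := {k | ∃ i j : Fin m → Fin n, (StrictMono i ∧
      IsInducedMatchingFamily (inLex G) (fun t => s(Sum.inl (i t), Sum.inr (j t)))) ∧
      ∑ t, (i t : ℕ) = k} with hS
  have hSne : S.Nonempty := by
    obtain ⟨i, j, h1, h2⟩ := hex
    exact ⟨∑ t, (i t : ℕ), i, j, ⟨h1, h2⟩, rfl⟩
  obtain ⟨i, j, ⟨hmono, hfam⟩, hsum⟩ := Nat.sInf_mem hSne
  refine ⟨i, j, hmono, hfam, ?_⟩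
  -- Step 3: minimality gives CondStar
  intro a t ht hadj hbad
  set i' : Fin m → Fin n := Function.update i a t with hi'
  have hf'eq : (fun u => if u = a then s(Sum.inl t, Sum.inr (j u))
                  else s(Sum.inl (i u), Sum.inr (j u)))
      = (fun u => s(Sum.inl (i' u), Sum.inr (j u))) := by
    funext u
    by_cases hu : u = a
    · subst hu; simp [hi']
    · simp [hi', hu, Function.update_of_ne hu]
  rw [hf'eq] at hbad
  have hi'inj : Function.Injective i' := inj_of_family hbad
  let σ := Tuple.sort i'
  have hvalid : StrictMono (i' ∘ σ) ∧
      IsInducedMatchingFamily (inLex G)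
        (fun u => s(Sum.inl ((i' ∘ σ) u), Sum.inr ((j ∘ σ) u))) :=
    ⟨(Tuple.monotone_sort _).strictMono_of_injective (hi'inj.comp σ.injective),
     family_comp_perm hbad σ⟩
  have hmem : (∑ u, ((i' ∘ σ) u : ℕ)) ∈ S :=
    ⟨i' ∘ σ, j ∘ σ, hvalid, rfl⟩
  have hlt : (∑ u, ((i' ∘ σ) u : ℕ)) < sInf S := by
    have hσ : ∑ u, ((i' ∘ σ) u : ℕ) = ∑ u, (i' u : ℕ) :=
      Equiv.sum_comp σ (fun u => (i' u : ℕ))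
    have h1 : ∑ u, (i' u : ℕ) = ∑ u ∈ Finset.univ.erase a, (i' u : ℕ) + (i' a : ℕ) :=
      (Finset.sum_erase_add _ _ (Finset.mem_univ a)).symm
    have h2 : ∑ u, (i u : ℕ) = ∑ u ∈ Finset.univ.erase a, (i u : ℕ) + (i a : ℕ) :=
      (Finset.sum_erase_add _ _ (Finset.mem_univ a)).symm
    have h3 : ∑ u ∈ Finset.univ.erase a, (i' u : ℕ) = ∑ u ∈ Finset.univ.erase a, (i u : ℕ) := by
      apply Finset.sum_congr rfl
      intro u hu
      rw [hi', Function.update_of_ne (Finset.ne_of_mem_erase hu)]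
    have h4 : (i' a : ℕ) < (i a : ℕ) := by
      rw [hi', Function.update_self]; exact ht
    rw [← hsum, hσ, h1, h2, h3]
    omega
  exact absurd (Nat.sInf_le hmem) (not_le.2 hlt)
end

section
/- Let G be a graph on [n] that has the interval property with respect to its labeling, let H = in_lex(G), and let M be an induced matching of H containing three edges {x_{i_s}, y_{j_s}}, {x_{i_{s+1}}, y_{j_{s+1}}}, {x_{i_{s+2}}, y_{j_{s+2}}} with i_s < j_s ≤ i_{s+1} < j_{s+1} ≤ i_{s+2}. Then {i_s, i_{s+2}} is not an edge of G; in particular the vertices i_s, i_{s+1}, i_{s+2} do not lie in a common clique of G. -/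
open SimpleGraph

/- The interval property propagates the edge {a, a''} down to {a, b'}, and then x_a — y_{b'}
is an edge of in_lex(G) joining two distinct edges of the induced matching. -/

theorem HasIntervalProperty.adj_of_lt_of_le {n : ℕ} {G : SimpleGraph (Fin n)}
    (hG : HasIntervalProperty G) {i j l : Fin n} (hij : G.Adj i j) (hil : i < l) (hlj : l ≤ j) :
    G.Adj i l :=
  hG i j i l hij (hil.trans_le hlj) le_rfl hil hlj

theorem inLex_adj_inl_inr_s9 {n : ℕ} {G : SimpleGraph (Fin n)} {i j : Fin n} (hij : i < j)
    (h : G.Adj i j) : (inLex G).Adj (Sum.inl i) (Sum.inr j) :=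
  ⟨Sum.inl_ne_inr, Or.inl ⟨i, j, hij, h, rfl, rfl⟩⟩

theorem IsInducedMatching.not_adj_inl_inr {n : ℕ} {G : SimpleGraph (Fin n)}
    {M : Set (Sym2 (Fin n ⊕ Fin n))} (hM : IsInducedMatching (inLex G) M) {a b a' b' : Fin n}
    (h1 : s(Sum.inl a, Sum.inr b) ∈ M) (h2 : s(Sum.inl a', Sum.inr b') ∈ M) (ha : a ≠ a')
    (hab' : a < b') : ¬ G.Adj a b' := by
  have hne : s(Sum.inl a, Sum.inr b) ≠ (s(Sum.inl a', Sum.inr b') : Sym2 (Fin n ⊕ Fin n)) := by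
    simp [ha]
  exact fun h ↦ hM.2.2 _ h1 _ h2 hne _ (Sym2.mem_mk_left _ _) _ (Sym2.mem_mk_right _ _)
    (inLex_adj_inl_inr_s9 hab' h)

theorem stmt_9_general {n : ℕ} (G : SimpleGraph (Fin n)) (hG : HasIntervalProperty G)
    (M : Set (Sym2 (Fin n ⊕ Fin n))) (hM : IsInducedMatching (inLex G) M)
    (a b a' b' a'' : Fin n)
    (h1 : s(Sum.inl a, Sum.inr b) ∈ M) (h2 : s(Sum.inl a', Sum.inr b') ∈ M)
    (hab : a < b) (hba' : b ≤ a') (ha'b' : a' < b') (hb'a'' : b' ≤ a'') :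
    ¬ G.Adj a a'' ∧ ¬ ∃ C : Set (Fin n), G.IsClique C ∧ a ∈ C ∧ a' ∈ C ∧ a'' ∈ C := by
  have haa' : a < a' := hab.trans_le hba'
  have hab' : a < b' := haa'.trans ha'b'
  have hnadj : ¬ G.Adj a a'' := fun h ↦
    hM.not_adj_inl_inr h1 h2 haa'.ne hab' (hG.adj_of_lt_of_le h hab' hb'a'')
  refine ⟨hnadj, ?_⟩
  rintro ⟨C, hC, haC, -, ha''C⟩
  exact hnadj (hC haC ha''C (hab'.trans_le hb'a'').ne)

/-- If an induced matching `M` of `in_lex(G)` contains three edges `{x_a, y_b}`,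
`{x_{a'}, y_{b'}}`, `{x_{a''}, y_{b''}}` with `a < b ≤ a' < b' ≤ a''` and `G` has the
interval property, then `{a, a''} ∉ E(G)`; in particular `a, a', a''` do not lie in a
common clique of `G`. -/
theorem stmt_9 {n : ℕ} (G : SimpleGraph (Fin n)) (hG : HasIntervalProperty G)
    (M : Set (Sym2 (Fin n ⊕ Fin n))) (hM : IsInducedMatching (inLex G) M)
    (a b a' b' a'' b'' : Fin n)
    (h1 : s(Sum.inl a, Sum.inr b) ∈ M) (h2 : s(Sum.inl a', Sum.inr b') ∈ M)
    (h3 : s(Sum.inl a'', Sum.inr b'') ∈ M)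
    (hab : a < b) (hba' : b ≤ a') (ha'b' : a' < b') (hb'a'' : b' ≤ a'') :
    ¬ G.Adj a a'' ∧ ¬ ∃ C : Set (Fin n), G.IsClique C ∧ a ∈ C ∧ a' ∈ C ∧ a'' ∈ C :=
  stmt_9_general G hG M hM a b a' b' a'' h1 h2 hab hba' ha'b' hb'a''
end

section
/- Let G be a connected graph on [n] that has the interval property with respect to its labeling, let H = in_lex(G), and let M = {x_{i_1}, y_{j_1}}, …, {x_{i_m}, y_{j_m}} be an induced matching of H with i_1 < ⋯ < i_m satisfying condition (∗). Suppose for some index s with 1 ≤ s ≤ m−1 that neither {i_s, i_{s+1}} nor {j_s, i_{s+1}} is an edge of G, and let j = min{ t : {t, i_{s+1}} is an edge of G }. Then j > j_s, and M together with the additional edge {x_j, y_{i_{s+1}}} is an induced matching of H of cardinality m+1. -/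
open SimpleGraph

lemma inLex_adj {n : ℕ} (G : SimpleGraph (Fin n)) (p q : Fin n) :
    (inLex G).Adj (Sum.inl p) (Sum.inr q) ↔ p < q ∧ G.Adj p q := by
  rw [inLex, fromRel_adj]
  constructor
  · rintro ⟨hne, ⟨x, y, hxy, hadj, h1, h2⟩ | ⟨x, y, hxy, hadj, h1, h2⟩⟩
    · obtain rfl := Sum.inl.inj h1
      obtain rfl := Sum.inr.inj h2
      exact ⟨hxy, hadj⟩
    · simp at h1
  · rintro ⟨hlt, hadj⟩
    exact ⟨by simp, Or.inl ⟨p, q, hlt, hadj, rfl, rfl⟩⟩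

lemma inLex_not_adj_ll {n : ℕ} (G : SimpleGraph (Fin n)) (p q : Fin n) :
    ¬ (inLex G).Adj (Sum.inl p) (Sum.inl q) := by
  rw [inLex, fromRel_adj]
  rintro ⟨hne, ⟨x, y, _, _, h1, h2⟩ | ⟨x, y, _, _, h1, h2⟩⟩ <;> simp at h2

lemma inLex_not_adj_rr {n : ℕ} (G : SimpleGraph (Fin n)) (p q : Fin n) :
    ¬ (inLex G).Adj (Sum.inr p) (Sum.inr q) := by
  rw [inLex, fromRel_adj]
  rintro ⟨hne, ⟨x, y, _, _, h1, h2⟩ | ⟨x, y, _, _, h1, h2⟩⟩ <;> simp at h1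

lemma cross_lemma {n : ℕ} (G : SimpleGraph (Fin n)) (k : Fin n) :
    ∀ {u w : Fin n}, G.Walk u w → u ≤ k → k < w →
      ∃ p q, G.Adj p q ∧ p ≤ k ∧ k < q := by
  intro u w walk
  induction walk with
  | nil => intro hu hw; exact absurd hu (not_le.2 hw)
  | @cons x y z h p ih =>
    intro hu hw
    by_cases hy : y ≤ k
    · exact ih hy hw
    · exact ⟨x, y, h, hu, not_le.1 hy⟩


/-- Case (b) in the proof of Proposition 2.4: if `G` is connected with the interval
property, `M` is an induced matching of `in_lex(G)` satisfying (∗), neither `{i_a, i_b}`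
nor `{j_a, i_b}` is an edge of `G` for consecutive indices `a, b`, and `jmin` is the least
vertex adjacent to `i_b`, then `jmin > j_a` and `M ∪ {{x_{jmin}, y_{i_b}}}` is an induced
matching of cardinality `m + 1`. -/
theorem stmt_11 {n m : ℕ} (G : SimpleGraph (Fin n)) (hconn : G.Connected)
    (hG : HasIntervalProperty G)
    (i j : Fin m → Fin n) (hmono : StrictMono i)
    (hM : IsInducedMatchingFamily (inLex G)
      (fun t => s(Sum.inl (i t), Sum.inr (j t))))
    (hstar : CondStar G i j)
    (a b : Fin m) (hab : (a : ℕ) + 1 = b)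
    (h1 : ¬ G.Adj (i a) (i b)) (h2 : ¬ G.Adj (j a) (i b))
    (jmin : Fin n) (hjmin : IsLeast {v : Fin n | G.Adj v (i b)} jmin) :
    j a < jmin ∧
    IsInducedMatching (inLex G)
      (Set.range (fun t => s(Sum.inl (i t), Sum.inr (j t))) ∪
        {s(Sum.inl jmin, Sum.inr (i b))}) ∧
    (Set.range (fun t => s(Sum.inl (i t), Sum.inr (j t))) ∪
        {s(Sum.inl jmin, Sum.inr (i b))}).ncard = m + 1 := by
  classical
  set F : Fin m → Sym2 (Fin n ⊕ Fin n) :=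
    fun t => s(Sum.inl (i t), Sum.inr (j t)) with hF
  obtain ⟨hinj, hsub, hdisj, hnadj⟩ := hM
  -- basic facts about the matching edges
  have hedge : ∀ t, i t < j t ∧ G.Adj (i t) (j t) := by
    intro t
    have h := hsub ⟨t, rfl⟩
    rw [hF] at h
    exact (inLex_adj G _ _).1 ((inLex G).mem_edgeSet.1 h)
  have hFne : ∀ u v : Fin m, u ≠ v → F u ≠ F v := fun u v huv h => huv (hinj h)
  have hjinj : ∀ u v : Fin m, u ≠ v → j u ≠ j v := by
    intro u v huv heq
    have h := hdisj (F u) ⟨u, rfl⟩ (F v) ⟨v, rfl⟩ (hFne u v huv) (Sum.inr (j u))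
      (by rw [hF]; simp)
    apply h
    rw [heq, hF]; simp
  have hnadjG : ∀ u v : Fin m, u ≠ v → ¬ (i u < j v ∧ G.Adj (i u) (j v)) := by
    intro u v huv h
    exact hnadj (F u) ⟨u, rfl⟩ (F v) ⟨v, rfl⟩ (hFne u v huv)
      (Sum.inl (i u)) (by rw [hF]; simp) (Sum.inr (j v)) (by rw [hF]; simp)
      ((inLex_adj G _ _).2 h)
  have hab' : a < b := by rw [Fin.lt_def]; omega
  have hiab : i a < i b := hmono hab'
  have hle_a : ∀ t : Fin m, t < b → t ≤ a := by
    intro t ht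
    rw [Fin.lt_def] at ht; rw [Fin.le_def]; omega
  -- jmin < i b via connectivity and interval property
  have hib_pos : 0 < (i b : ℕ) := by
    have := Fin.lt_def.1 hiab; omega
  have hibn : (i b : ℕ) < n := (i b).isLt
  set kp : Fin n := ⟨(i b : ℕ) - 1, by omega⟩ with hkp
  have hkp_lt : kp < i b := by rw [Fin.lt_def]; simp [hkp]; omega
  have hadjkp : G.Adj kp (i b) := by
    obtain ⟨w⟩ := hconn.preconnected (i a) (i b)
    obtain ⟨p, q, hpq, hp, hq⟩ := cross_lemma G kp w
      (by rw [Fin.le_def]; have := Fin.lt_def.1 hiab; simp [hkp]; omega) hkp_lt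
    exact hG p q kp (i b) hpq (lt_of_le_of_lt hp hq) hp hkp_lt
      (by rw [Fin.le_def]; have := Fin.lt_def.1 hq; simp [hkp] at this ⊢; omega)
  have hjmin_lt_ib : jmin < i b := lt_of_le_of_lt (hjmin.2 hadjkp) hkp_lt
  -- j a < i b
  have hja_ib : j a < i b := by
    rcases lt_trichotomy (j a) (i b) with h | h | h
    · exact h
    · exact absurd (h ▸ (hedge a).2) h1
    · exact absurd (hG (i a) (j a) (i a) (i b) (hedge a).2 (hedge a).1 le_rfl hiab h.le) h1
  -- j a < jmin
  have hja_jmin : j a < jmin := by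
    rcases lt_trichotomy (j a) jmin with h | h | h
    · exact h
    · exact absurd (h ▸ hjmin.1) h2
    · exact absurd (hG jmin (i b) (j a) (i b) hjmin.1 hjmin_lt_ib h.le hja_ib le_rfl) h2
  -- no j t strictly between jmin and i b
  have hF7 : ∀ t, ¬ (jmin < j t ∧ j t < i b) := by
    rintro t ⟨h1t, h2t⟩
    have hti : i t < i b := lt_trans (hedge t).1 h2t
    have htb : t < b := hmono.lt_iff_lt.1 hti
    have htne : t ≠ a := by rintro rfl; exact lt_asymm hja_jmin h1t
    have hta' : t < a := lt_of_le_of_ne (hle_a t htb) htne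
    have hia_jt : i a < j t := lt_trans (lt_trans (hedge a).1 hja_jmin) h1t
    exact hnadjG a t (Ne.symm htne)
      ⟨hia_jt, hG (i t) (j t) (i a) (j t) (hedge t).2 (hedge t).1
        (hmono hta').le hia_jt le_rfl⟩
  have hF8 : ∀ t, j t ≠ i b := by
    intro t heq
    have h1t : i t < i b := heq ▸ (hedge t).1
    have h2t : jmin ≤ i t := hjmin.2 (heq ▸ (hedge t).2)
    have h3t : i t ≤ i a := hmono.monotone (hle_a t (hmono.lt_iff_lt.1 h1t))
    exact absurd (lt_of_le_of_lt (le_trans h2t h3t) (lt_trans (hedge a).1 hja_jmin))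
      (lt_irrefl jmin)
  have hF9 : ∀ t, t ≠ b → ¬ (jmin < j t ∧ G.Adj jmin (j t)) := by
    rintro t htb ⟨hlt, hadj⟩
    rcases lt_trichotomy (j t) (i b) with h | h | h
    · exact hF7 t ⟨hlt, h⟩
    · exact hF8 t h
    · exact hnadjG b t (Ne.symm htb)
        ⟨h, hG jmin (j t) (i b) (j t) hadj hlt hjmin_lt_ib.le h le_rfl⟩
  -- the case t = b, using condition (∗)
  have hF10 : ¬ (jmin < j b ∧ G.Adj jmin (j b)) := by
    rintro ⟨hlt, hadj⟩
    apply hstar b jmin hjmin_lt_ib hadj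
    set F' : Fin m → Sym2 (Fin n ⊕ Fin n) :=
      fun u => if u = b then s(Sum.inl jmin, Sum.inr (j u))
               else s(Sum.inl (i u), Sum.inr (j u)) with hF'
    have hF'b : F' b = s(Sum.inl jmin, Sum.inr (j b)) := by rw [hF']; simp
    have hF'ne : ∀ u, u ≠ b → F' u = F u := by
      intro u hu; rw [hF', hF]; simp [hu]
    have hjmin_ne_i' : ∀ w : Fin m, w ≠ b → jmin ≠ i w := by
      intro w hwb
      rcases lt_or_gt_of_ne hwb with h | h
      · have : i w ≤ i a := hmono.monotone (hle_a w h)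
        exact ne_of_gt (lt_of_le_of_lt this (lt_trans (hedge a).1 hja_jmin))
      · exact ne_of_lt (lt_trans hjmin_lt_ib (hmono h))
    refine ⟨?_, ?_, ?_, ?_⟩
    · -- injectivity
      intro u v heq
      by_cases hub : u = b <;> by_cases hvb : v = b
      · rw [hub, hvb]
      · subst hub
        rw [hF'b, hF'ne v hvb, hF, Sym2.eq_iff] at heq
        rcases heq with ⟨h1', h2'⟩ | ⟨h1', h2'⟩
        · exact absurd (Sum.inr.inj h2').symm (hjinj v u hvb)
        · simp at h1'
      · subst hvb
        rw [hF'b, hF'ne u hub, hF, Sym2.eq_iff] at heq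
        rcases heq with ⟨h1', h2'⟩ | ⟨h1', h2'⟩
        · exact absurd (Sum.inr.inj h2') (hjinj u v hub)
        · simp at h2'
      · rw [hF'ne u hub, hF'ne v hvb] at heq
        exact hinj heq
    · -- edges
      rintro e ⟨u, rfl⟩
      by_cases hub : u = b
      · subst hub
        rw [hF'b, SimpleGraph.mem_edgeSet, inLex_adj]
        exact ⟨hlt, hadj⟩
      · rw [hF'ne u hub]
        exact hsub ⟨u, rfl⟩
    · -- disjointness
      rintro e ⟨u, rfl⟩ f ⟨v, rfl⟩ hne w hw hwf
      have huv : u ≠ v := by rintro rfl; exact hne rfl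
      by_cases hub : u = b <;> by_cases hvb : v = b
      · exact huv (hub.trans hvb.symm)
      · subst hub
        rw [hF'b, Sym2.mem_iff] at hw
        rw [hF'ne v hvb, hF, Sym2.mem_iff] at hwf
        rcases hw with rfl | rfl <;> rcases hwf with h | h
        · exact hjmin_ne_i' v hvb (Sum.inl.inj h)
        · simp at h
        · simp at h
        · exact hjinj u v (Ne.symm hvb) (Sum.inr.inj h)
      · subst hvb
        rw [hF'ne u hub, hF, Sym2.mem_iff] at hw
        rw [hF'b, Sym2.mem_iff] at hwf
        rcases hw with rfl | rfl <;> rcases hwf with h | h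
        · exact hjmin_ne_i' u hub (Sum.inl.inj h).symm
        · simp at h
        · simp at h
        · exact hjinj u v hub (Sum.inr.inj h)
      · rw [hF'ne u hub] at hw
        rw [hF'ne v hvb] at hwf
        exact hdisj (F u) ⟨u, rfl⟩ (F v) ⟨v, rfl⟩ (hFne u v huv) w hw hwf
    · -- non-adjacency
      have key : ∀ (t : Fin m), t ≠ b → ∀ u v, u ∈ s(Sum.inl jmin, Sum.inr (j b)) →
          v ∈ F t → ¬ (inLex G).Adj u v := by
        intro t htb u v hu hv hadjH
        rw [Sym2.mem_iff] at hu
        rw [hF, Sym2.mem_iff] at hv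
        rcases hu with rfl | rfl <;> rcases hv with rfl | rfl
        · exact inLex_not_adj_ll G _ _ hadjH
        · exact hF9 t htb ((inLex_adj G _ _).1 hadjH)
        · exact hnadjG t b htb ((inLex_adj G _ _).1 hadjH.symm)
        · exact inLex_not_adj_rr G _ _ hadjH
      rintro e ⟨u, rfl⟩ f ⟨v, rfl⟩ hne w hw z hz hadjH
      have huv : u ≠ v := by rintro rfl; exact hne rfl
      by_cases hub : u = b <;> by_cases hvb : v = b
      · exact huv (hub.trans hvb.symm)
      · subst hub
        rw [hF'b] at hw
        rw [hF'ne v hvb] at hz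
        exact key v hvb w z hw hz hadjH
      · subst hvb
        rw [hF'b] at hz
        rw [hF'ne u hub] at hw
        exact key u hub z w hz hw hadjH.symm
      · rw [hF'ne u hub] at hw
        rw [hF'ne v hvb] at hz
        exact hnadj (F u) ⟨u, rfl⟩ (F v) ⟨v, rfl⟩ (hFne u v huv) w hw z hz hadjH
  have hF11 : ∀ t, ¬ (jmin < j t ∧ G.Adj jmin (j t)) := by
    intro t
    by_cases h : t = b
    · rw [h]; exact hF10
    · exact hF9 t h
  have hF12 : ∀ t, ¬ (i t < i b ∧ G.Adj (i t) (i b)) := by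
    rintro t ⟨hlt, hadj⟩
    have h2t : jmin ≤ i t := hjmin.2 hadj
    have h3t : i t ≤ i a := hmono.monotone (hle_a t (hmono.lt_iff_lt.1 hlt))
    exact absurd (lt_of_le_of_lt (le_trans h2t h3t) (lt_trans (hedge a).1 hja_jmin))
      (lt_irrefl jmin)
  have hjmin_ne_i : ∀ w : Fin m, jmin ≠ i w := by
    intro w
    by_cases hwb : w = b
    · subst hwb; exact ne_of_lt hjmin_lt_ib
    · rcases lt_or_gt_of_ne hwb with h | h
      · have : i w ≤ i a := hmono.monotone (hle_a w h)
        exact ne_of_gt (lt_of_le_of_lt this (lt_trans (hedge a).1 hja_jmin))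
      · exact ne_of_lt (lt_trans hjmin_lt_ib (hmono h))
  have hstar_notmem : s(Sum.inl jmin, Sum.inr (i b)) ∉ Set.range F := by
    rintro ⟨t, ht⟩
    rw [hF, Sym2.eq_iff] at ht
    rcases ht with ⟨h1', h2'⟩ | ⟨h1', h2'⟩
    · exact hF8 t (Sum.inr.inj h2')
    · simp at h1'
  refine ⟨hja_jmin, ⟨?_, ?_, ?_⟩, ?_⟩
  · -- edges
    rintro e (he | he)
    · exact hsub he
    · rw [Set.mem_singleton_iff] at he
      subst he
      rw [SimpleGraph.mem_edgeSet, inLex_adj]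
      exact ⟨hjmin_lt_ib, hjmin.1⟩
  · -- disjointness
    have key : ∀ (t : Fin m) (w : Fin n ⊕ Fin n), w ∈ F t →
        w ∉ s(Sum.inl jmin, Sum.inr (i b)) := by
      intro t w hw hw'
      rw [hF, Sym2.mem_iff] at hw
      rw [Sym2.mem_iff] at hw'
      rcases hw with rfl | rfl <;> rcases hw' with h | h
      · exact hjmin_ne_i t (Sum.inl.inj h).symm
      · simp at h
      · simp at h
      · exact hF8 t (Sum.inr.inj h)
    rintro e (he | he) f (hf | hf) hne w hw hwf
    · obtain ⟨u, rfl⟩ := he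
      obtain ⟨v, rfl⟩ := hf
      have huv : u ≠ v := by rintro rfl; exact hne rfl
      exact hdisj (F u) ⟨u, rfl⟩ (F v) ⟨v, rfl⟩ (hFne u v huv) w hw hwf
    · obtain ⟨u, rfl⟩ := he
      rw [Set.mem_singleton_iff] at hf
      subst hf
      exact key u w hw hwf
    · obtain ⟨v, rfl⟩ := hf
      rw [Set.mem_singleton_iff] at he
      subst he
      exact key v w hwf hw
    · rw [Set.mem_singleton_iff] at he hf
      exact hne (he.trans hf.symm)
  · -- non-adjacency
    have key : ∀ (t : Fin m) (w z : Fin n ⊕ Fin n), w ∈ F t →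
        z ∈ s(Sum.inl jmin, Sum.inr (i b)) → ¬ (inLex G).Adj w z := by
      intro t w z hw hz hadjH
      rw [hF, Sym2.mem_iff] at hw
      rw [Sym2.mem_iff] at hz
      rcases hw with rfl | rfl <;> rcases hz with rfl | rfl
      · exact inLex_not_adj_ll G _ _ hadjH
      · exact hF12 t ((inLex_adj G _ _).1 hadjH)
      · exact hF11 t ((inLex_adj G _ _).1 hadjH.symm)
      · exact inLex_not_adj_rr G _ _ hadjH
    rintro e (he | he) f (hf | hf) hne w hw z hz hadjH
    · obtain ⟨u, rfl⟩ := he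
      obtain ⟨v, rfl⟩ := hf
      have huv : u ≠ v := by rintro rfl; exact hne rfl
      exact hnadj (F u) ⟨u, rfl⟩ (F v) ⟨v, rfl⟩ (hFne u v huv) w hw z hz hadjH
    · obtain ⟨u, rfl⟩ := he
      rw [Set.mem_singleton_iff] at hf
      subst hf
      exact key u w z hw hz hadjH
    · obtain ⟨v, rfl⟩ := hf
      rw [Set.mem_singleton_iff] at he
      subst he
      exact key v z w hz hw hadjH.symm
    · rw [Set.mem_singleton_iff] at he hf
      exact (hne (he.trans hf.symm)).elim
  · -- cardinality
    rw [Set.union_singleton, Set.ncard_insert_of_notMem hstar_notmem (Set.finite_range F),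
      ← Nat.card_coe_set_eq, Nat.card_range_of_injective hinj, Nat.card_eq_fintype_card,
      Fintype.card_fin]
end

section
/- Let G be a connected graph on [n] that has the interval property with respect to its labeling, let H = in_lex(G), and let ℓ be the length of the longest induced path of G. Then indmatch(H) ≤ ℓ. -/
open SimpleGraph

section Aux

open Classical in
noncomputable def maxNbr {n : ℕ} (G : SimpleGraph (Fin n)) (u : Fin n) : Fin n :=
  (Finset.univ.filter fun v => v = u ∨ G.Adj u v).max' ⟨u, by simp⟩

variable {n : ℕ} {G : SimpleGraph (Fin n)}

lemma le_maxNbr_self (u : Fin n) : u ≤ maxNbr G u := by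
  classical
  exact Finset.le_max' _ u (by simp)

lemma adj_le_maxNbr {u v : Fin n} (h : G.Adj u v) : v ≤ maxNbr G u := by
  classical
  exact Finset.le_max' _ v (by simp [h])

lemma maxNbr_spec (u : Fin n) : maxNbr G u = u ∨ G.Adj u (maxNbr G u) := by
  classical
  have := Finset.max'_mem (Finset.univ.filter fun v => v = u ∨ G.Adj u v)
    ⟨u, by simp⟩
  simpa [maxNbr] using this

lemma adj_iff_le_maxNbr (hG : HasIntervalProperty G) {u v : Fin n} (huv : u < v) :
    G.Adj u v ↔ v ≤ maxNbr G u := by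
  constructor
  · exact adj_le_maxNbr
  · intro hv
    rcases maxNbr_spec (G := G) u with h | h
    · exact absurd (lt_of_lt_of_le huv (h ▸ hv)) (lt_irrefl u)
    · exact hG u (maxNbr G u) u v h (lt_of_lt_of_le huv hv) le_rfl huv hv

lemma maxNbr_mono (hG : HasIntervalProperty G) {u u' : Fin n} (h : u ≤ u') :
    maxNbr G u ≤ maxNbr G u' := by
  rcases le_or_gt (maxNbr G u) u' with h1 | h1
  · exact le_trans h1 (le_maxNbr_self u')
  · rcases maxNbr_spec (G := G) u with h2 | h2
    · rw [h2]; exact le_trans h (le_maxNbr_self u')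
    · exact adj_le_maxNbr (hG u (maxNbr G u) u' (maxNbr G u) h2 (lt_of_le_of_lt h h1) h h1 le_rfl)

lemma adj_succ_of_conn (hG : HasIntervalProperty G) (hconn : G.Connected)
    (u : Fin n) (h : (u : ℕ) + 1 < n) : G.Adj u ⟨(u : ℕ) + 1, h⟩ := by
  have key : ∀ {s t : Fin n}, G.Walk s t → s ≤ u → u < t → G.Adj u ⟨(u : ℕ) + 1, h⟩ := by
    intro s t w
    induction w with
    | nil =>
      intro hs ht
      exact absurd ht hs.not_gt
    | cons hab w ih =>
      rename_i a b c
      intro hs ht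
      by_cases hb : u < b
      · exact hG a b u ⟨(u : ℕ) + 1, h⟩ hab (lt_of_le_of_lt hs hb) hs
          (by rw [Fin.lt_def]; exact Nat.lt_succ_self _)
          (by rw [Fin.le_def]; exact Fin.lt_def.mp hb)
      · exact ih (not_lt.1 hb) ht
  exact (hconn.preconnected u ⟨(u : ℕ) + 1, h⟩).elim fun w =>
    key w le_rfl (by rw [Fin.lt_def]; exact Nat.lt_succ_self _)

lemma lt_maxNbr (hG : HasIntervalProperty G) (hconn : G.Connected) {u v : Fin n}
    (h : u < v) : u < maxNbr G u := by
  have h1 : (u : ℕ) + 1 < n := lt_of_le_of_lt (Fin.lt_def.mp h) v.isLt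
  have h2 := adj_succ_of_conn hG hconn u h1
  exact lt_of_lt_of_le (by rw [Fin.lt_def]; exact Nat.lt_succ_self _) (adj_le_maxNbr h2)

noncomputable def pathSeq {n : ℕ} (G : SimpleGraph (Fin n)) (cap : ℕ → Fin n)
    (start : Fin n) : ℕ → Fin n
  | 0 => start
  | k + 1 => min (maxNbr G (pathSeq G cap start k)) (cap (k + 1))

end Aux


/-- If `G` is connected with the interval property, `ℓ` is the length of the longest
induced path of `G` and `m = indmatch(in_lex(G))`, then `m ≤ ℓ`. -/
theorem stmt_14 {n : ℕ} (G : SimpleGraph (Fin n)) (hconn : G.Connected)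
    (hG : HasIntervalProperty G) (ℓ m : ℕ)
    (hℓ : IsGreatest {l : ℕ | ∃ p : Fin (l + 1) → Fin n, IsInducedPath G l p} ℓ)
    (hm : IsGreatest {k : ℕ | ∃ M : Set (Sym2 (Fin n ⊕ Fin n)),
            IsInducedMatching (inLex G) M ∧ M.ncard = k} m) :
    m ≤ ℓ := by
  classical
  rcases Nat.eq_zero_or_pos m with rfl | hm0
  · exact Nat.zero_le ℓ
  obtain ⟨M, hM, hcard⟩ := hm.1
  obtain ⟨hMsub, hMdisj, hMind⟩ := hM
  -- every element of M has the form s(inl i, inr j)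
  have hform : ∀ e ∈ M, ∃ p : Fin n × Fin n, e = s(Sum.inl p.1, Sum.inr p.2) := by
    intro e
    induction e using Sym2.ind with
    | _ u v =>
      intro he
      have hedge : (inLex G).Adj u v := (SimpleGraph.mem_edgeSet (inLex G)).mp (hMsub he)
      rw [inLex, SimpleGraph.fromRel_adj] at hedge
      rcases hedge.2 with ⟨i, j, -, -, hu, hv⟩ | ⟨i, j, -, -, hv, hu⟩
      · exact ⟨(i, j), by rw [hu, hv]⟩
      · exact ⟨(i, j), by rw [hu, hv]; exact Sym2.eq_swap⟩
  set Pf : Finset (Fin n × Fin n) :=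
    Finset.univ.filter (fun p : Fin n × Fin n => s(Sum.inl p.1, Sum.inr p.2) ∈ M) with hPfdef
  have hembinj : Function.Injective
      (fun p : Fin n × Fin n => s(Sum.inl p.1, Sum.inr p.2)) := by
    intro p q h
    simp only [Sym2.eq_iff] at h
    rcases h with ⟨h1, h2⟩ | ⟨h1, h2⟩
    · exact Prod.ext (Sum.inl_injective h1) (Sum.inr_injective h2)
    · simp at h1
  have hMeq : M = ↑(Pf.image (fun p : Fin n × Fin n => s(Sum.inl p.1, Sum.inr p.2))) := by
    ext e
    simp only [Finset.coe_image, Set.mem_image, Finset.mem_coe, hPfdef,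
      Finset.mem_filter, Finset.mem_univ, true_and]
    constructor
    · intro he
      obtain ⟨p, hp⟩ := hform e he
      exact ⟨p, by rw [← hp]; exact he, hp.symm⟩
    · rintro ⟨p, hp, rfl⟩
      exact hp
  have hPfcard : Pf.card = m := by
    rw [hMeq, Set.ncard_coe_finset, Finset.card_image_of_injective _ hembinj] at hcard
    exact hcard
  have hPfmem : ∀ p ∈ Pf, s(Sum.inl (p : Fin n × Fin n).1, Sum.inr p.2) ∈ M := by
    intro p hp
    rw [hPfdef, Finset.mem_filter] at hp
    exact hp.2
  have hfstinj : Set.InjOn Prod.fst (Pf : Set (Fin n × Fin n)) := by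
    intro p hp q hq hpq
    by_contra hne
    have hme := hPfmem p hp
    have hmq := hPfmem q hq
    have hnee : s(Sum.inl p.1, Sum.inr p.2) ≠ s(Sum.inl q.1, Sum.inr q.2) :=
      fun hcon => hne (hembinj hcon)
    have := hMdisj _ hme _ hmq hnee (Sum.inl p.1) (by simp)
    exact this (by rw [hpq]; simp)
  set I : Finset (Fin n) := Pf.image Prod.fst with hIdef
  have hIcard : I.card = m := by
    rw [hIdef, Finset.card_image_of_injOn hfstinj, hPfcard]
  set oi := I.orderIsoOfFin hIcard with hoidef
  set ii : Fin m → Fin n := fun a => (oi a : Fin n) with hiidef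
  have hiimono : StrictMono ii := by
    intro a b hab
    rw [hiidef]
    exact Subtype.coe_lt_coe.mpr (oi.strictMono hab)
  have hjj0 : ∀ a : Fin m, ∃ j : Fin n, (ii a, j) ∈ Pf := by
    intro a
    have hmem : ii a ∈ I := (oi a).2
    rw [hIdef, Finset.mem_image] at hmem
    obtain ⟨p, hp, hpa⟩ := hmem
    refine ⟨p.2, ?_⟩
    rw [← hpa]
    simpa using hp
  choose jj hjjPf using hjj0
  have hmemM : ∀ a : Fin m, s(Sum.inl (ii a), Sum.inr (jj a)) ∈ M := by
    intro a
    exact hPfmem _ (hjjPf a)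
  have hadjG : ∀ a : Fin m, ii a < jj a ∧ G.Adj (ii a) (jj a) := by
    intro a
    have hedge : (inLex G).Adj (Sum.inl (ii a)) (Sum.inr (jj a)) :=
      (SimpleGraph.mem_edgeSet (inLex G)).mp (hMsub (hmemM a))
    rw [inLex, SimpleGraph.fromRel_adj] at hedge
    rcases hedge.2 with ⟨i, j, hlt, hadj, hu, hv⟩ | ⟨i, j, hlt, hadj, hu, hv⟩
    · obtain rfl : ii a = i := Sum.inl_injective hu
      obtain rfl : jj a = j := Sum.inr_injective hv
      exact ⟨hlt, hadj⟩
    · simp at hv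
  have hedgene : ∀ a b : Fin m, a ≠ b →
      s(Sum.inl (ii a), Sum.inr (jj a)) ≠ s(Sum.inl (ii b), Sum.inr (jj b)) := by
    intro a b hab hcon
    simp only [Sym2.eq_iff] at hcon
    rcases hcon with ⟨h1, -⟩ | ⟨h1, -⟩
    · exact hab (hiimono.injective (Sum.inl_injective h1))
    · simp at h1
  have hnadjH : ∀ a b : Fin m, a ≠ b →
      ¬ (inLex G).Adj (Sum.inl (ii a)) (Sum.inr (jj b)) := by
    intro a b hab
    exact hMind _ (hmemM a) _ (hmemM b) (hedgene a b hab) _ (by simp) _ (by simp)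
  have hcross : ∀ a b : Fin m, a < b → ¬ G.Adj (ii a) (jj b) := by
    intro a b hab hadj
    apply hnadjH a b (ne_of_lt hab)
    rw [inLex, SimpleGraph.fromRel_adj]
    exact ⟨by simp, Or.inl ⟨ii a, jj b, lt_trans (hiimono hab) (hadjG b).1, hadj, rfl, rfl⟩⟩
  have hsep : ∀ a b : Fin m, a < b → jj a ≤ ii b := by
    intro a b hab
    by_contra hcon
    push_neg at hcon
    have hadj' : G.Adj (ii b) (jj a) :=
      hG (ii a) (jj a) (ii b) (jj a) (hadjG a).2 (hadjG a).1 (le_of_lt (hiimono hab)) hcon le_rfl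
    apply hnadjH b a (ne_of_gt hab)
    rw [inLex, SimpleGraph.fromRel_adj]
    exact ⟨by simp, Or.inl ⟨ii b, jj a, hcon, hadj', rfl, rfl⟩⟩
  have hn : 0 < n := (ii ⟨0, hm0⟩).pos
  set Icap : ℕ → Fin n := fun k => if h : k < m then ii ⟨k, h⟩ else ⟨n - 1, by omega⟩
    with hIcapdef
  have hIcap_lt : ∀ k (hk : k < m), Icap k = ii ⟨k, hk⟩ := by
    intro k hk
    rw [hIcapdef]
    exact dif_pos hk
  have hIcap_ge : ∀ k, ¬ k < m → ∀ u : Fin n, u ≤ Icap k := by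
    intro k hk u
    rw [hIcapdef]
    simp only [dif_neg hk]
    show (u : ℕ) ≤ n - 1
    have := u.isLt
    omega
  set v : ℕ → Fin n := pathSeq G Icap (ii ⟨0, hm0⟩) with hvdef
  have hv0 : v 0 = ii ⟨0, hm0⟩ := by rw [hvdef]; rfl
  have hvs : ∀ k, v (k + 1) = min (maxNbr G (v k)) (Icap (k + 1)) := by
    intro k
    rw [hvdef]
    rfl
  have hcap : ∀ k (hk : k < m), v k ≤ ii ⟨k, hk⟩ := by
    intro k hk
    cases k with
    | zero => rw [hv0]
    | succ k =>
      rw [hvs k, ← hIcap_lt _ hk]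
      exact min_le_right _ _
  have hlt : ∀ k, k < m → v k < v (k + 1) := by
    intro k hk
    rw [hvs k]
    have h1 : v k ≤ ii ⟨k, hk⟩ := hcap k hk
    have h2 : v k < jj ⟨k, hk⟩ := lt_of_le_of_lt h1 (hadjG ⟨k, hk⟩).1
    refine lt_min (lt_maxNbr hG hconn h2) ?_
    by_cases hk1 : k + 1 < m
    · rw [hIcap_lt _ hk1]
      exact lt_of_le_of_lt h1 (hiimono (by rw [Fin.lt_def]; exact Nat.lt_succ_self _))
    · exact lt_of_lt_of_le h2 (hIcap_ge _ hk1 _)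
  have hskip : ∀ k, k + 2 ≤ m → maxNbr G (v k) < v (k + 2) := by
    intro k hk2
    have hk : k < m := by omega
    have hk1 : k + 1 < m := by omega
    rcases le_or_gt (maxNbr G (v k)) (Icap (k + 1)) with hc | hc
    · have hve : v (k + 1) = maxNbr G (v k) := by
        rw [hvs k]
        exact min_eq_left hc
      rw [← hve]
      exact hlt (k + 1) hk1
    · have hv1 : v (k + 1) = Icap (k + 1) := by
        rw [hvs k]
        exact min_eq_right hc.le
      have h1 : v k ≤ ii ⟨k, hk⟩ := hcap k hk
      have h2 : maxNbr G (v k) ≤ maxNbr G (ii ⟨k, hk⟩) := maxNbr_mono hG h1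
      have hfinlt : (⟨k, hk⟩ : Fin m) < ⟨k + 1, hk1⟩ := by
        rw [Fin.lt_def]; exact Nat.lt_succ_self _
      have h3 : maxNbr G (ii ⟨k, hk⟩) < jj ⟨k + 1, hk1⟩ := by
        by_contra hcon
        push_neg at hcon
        have hlt' : ii ⟨k, hk⟩ < jj ⟨k + 1, hk1⟩ :=
          lt_trans (hiimono hfinlt) (hadjG ⟨k + 1, hk1⟩).1
        exact hcross ⟨k, hk⟩ ⟨k + 1, hk1⟩ hfinlt ((adj_iff_le_maxNbr hG hlt').mpr hcon)
      have h4 : jj ⟨k + 1, hk1⟩ ≤ v (k + 2) := by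
        rw [hvs (k + 1)]
        refine le_min ?_ ?_
        · rw [hv1, hIcap_lt _ hk1]
          exact adj_le_maxNbr (hadjG ⟨k + 1, hk1⟩).2
        · by_cases hk2' : k + 2 < m
          · rw [hIcap_lt _ hk2']
            exact hsep ⟨k + 1, hk1⟩ ⟨k + 2, hk2'⟩ (by rw [Fin.lt_def]; exact Nat.lt_succ_self _)
          · exact hIcap_ge _ hk2' _
      exact lt_of_le_of_lt h2 (lt_of_lt_of_le h3 h4)
  have hmono : ∀ l, l ≤ m → ∀ k, k < l → v k < v l := by
    intro l
    induction l with
    | zero => intro _ k hk; omega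
    | succ l ih =>
      intro hlm k hk
      rcases Nat.lt_or_ge k l with h | h
      · exact lt_trans (ih (by omega) k h) (hlt l (by omega))
      · obtain rfl : k = l := by omega
        exact hlt k (by omega)
  have hadjcons : ∀ k, k < m → G.Adj (v k) (v (k + 1)) := by
    intro k hk
    refine (adj_iff_le_maxNbr hG (hlt k hk)).mpr ?_
    rw [hvs k]
    exact min_le_left _ _
  have hnadj : ∀ k l, k + 2 ≤ l → l ≤ m → ¬ G.Adj (v k) (v l) := by
    intro k l hkl hlm hadj
    have h1 : v l ≤ maxNbr G (v k) := adj_le_maxNbr hadj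
    have h2 : maxNbr G (v k) < v (k + 2) := hskip k (by omega)
    have h3 : v (k + 2) ≤ v l := by
      rcases Nat.eq_or_lt_of_le hkl with h | h
      · rw [h]
      · exact (hmono l hlm (k + 2) h).le
    exact absurd (lt_of_le_of_lt h1 h2) h3.not_gt
  have hsm : StrictMono (fun a : Fin (m + 1) => v a.val) := by
    intro a b hab
    have hb := b.isLt
    exact hmono b.val (by omega) a.val hab
  have hpath : IsInducedPath G m (fun a : Fin (m + 1) => v a.val) := by
    refine ⟨hsm.injective, ?_⟩
    intro a b
    have ha := a.isLt
    have hb := b.isLt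
    constructor
    · intro hadj
      by_contra hcon
      push_neg at hcon
      obtain ⟨h1, h2⟩ := hcon
      rcases lt_trichotomy (a : ℕ) (b : ℕ) with h | h | h
      · have hab2 : (a : ℕ) + 2 ≤ (b : ℕ) := by omega
        exact hnadj a.val b.val hab2 (by omega) hadj
      · have : a = b := Fin.ext h
        rw [this] at hadj
        exact G.irrefl hadj
      · have hab2 : (b : ℕ) + 2 ≤ (a : ℕ) := by omega
        exact hnadj b.val a.val hab2 (by omega) hadj.symm
    · intro h
      rcases h with h | h
      · have hb' : (b : ℕ) = (a : ℕ) + 1 := h.symm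
        simp only [hb']
        exact hadjcons a.val (by omega)
      · have ha' : (a : ℕ) = (b : ℕ) + 1 := h.symm
        simp only [ha']
        exact (hadjcons b.val (by omega)).symm
  exact hℓ.2 ⟨(fun a : Fin (m + 1) => v a.val), hpath⟩
end
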